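/- Let g be a polynomial with deg g ≤ 2. Then the Volterra operator V_g f(z) = ∫₀^z f(w)·g'(w) dw is bounded on F^∞_{ψ_m}: there exists C such that ‖V_g f‖_{(m,∞)} ≤ C·‖f‖_{(m,∞)} for all f ∈ F^∞_{ψ_m}. -/

import Mathlib

open MeasureTheory

/-- The weight function ψ_m(z) = |z|²/2 − m·log(1+|z|). -/
noncomputable def psi (m : ℕ) (z : ℂ) : ℝ :=
  ‖z‖ ^ 2 / 2 - m * Real.log (1 + ‖z‖)

/-- Integral of F along the segment from 0 to z. -/
noncomputable def lineInt (F : ℂ → ℂ) (z : ℂ) : ℂ :=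
  (∫ t in (0:ℝ)..1, F (t * z)) * z

/-- The Volterra-type operator V_g f(z) = ∫₀^z f(w) g'(w) dw. -/
noncomputable def Vg (g f : ℂ → ℂ) : ℂ → ℂ :=
  lineInt fun w => f w * deriv g w

/-!
For `t ∈ [0, 1]` the weight satisfies `ψ_m(tz) ≤ ψ_m(z) + (1 - t)(m|z| - |z|²/2)`, so the integrand
of `V_g f(z) = z ∫₀¹ f(tz) g'(tz) dt` is at most `‖f‖ e^{ψ_m(z)} (1 + |z|) e^{(1-t)(m|z| - |z|²/2)}` up to
a constant, `g'` being affine. For large `|z|` the `t`-integral of the Gaussian factor is `O(|z|⁻²)`,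
which absorbs the factor `|z|(1 + |z|)`; for bounded `|z|` everything is bounded.
-/
open Real Set Interval

theorem deriv_quadratic (a b c w : ℂ) :
    deriv (fun w => a * w ^ 2 + b * w + c) w = 2 * a * w + b := by
  have h := (((hasDerivAt_pow 2 w).const_mul a).add ((hasDerivAt_id w).const_mul b)).add_const c
  refine (h.congr_deriv ?_).deriv
  ring

theorem norm_deriv_quadratic_le (a b c w : ℂ) :
    ‖deriv (fun w => a * w ^ 2 + b * w + c) w‖ ≤ (2 * ‖a‖ + ‖b‖ + 1) * (1 + ‖w‖) := by
  rw [deriv_quadratic]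
  calc ‖2 * a * w + b‖ ≤ 2 * ‖a‖ * ‖w‖ + ‖b‖ := by
        simpa [norm_mul] using norm_add_le (2 * a * w) b
    _ ≤ (2 * ‖a‖ + ‖b‖ + 1) * (1 + ‖w‖) := by
        nlinarith [norm_nonneg a, norm_nonneg b, norm_nonneg w,
          mul_nonneg (norm_nonneg b) (norm_nonneg w)]

theorem log_one_add_le_log_one_add_mul_add {r t : ℝ} (hr : 0 ≤ r) (ht0 : 0 ≤ t) (ht1 : t ≤ 1) :
    log (1 + r) ≤ log (1 + t * r) + (1 - t) * r := by
  have htr : 0 < 1 + t * r := by positivity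
  calc log (1 + r) ≤ log ((1 + t * r) * exp ((1 - t) * r)) := by
        gcongr
        calc 1 + r ≤ (1 + t * r) * (1 + (1 - t) * r) := by
              nlinarith [mul_nonneg (mul_nonneg ht0 (sub_nonneg.2 ht1)) (mul_nonneg hr hr)]
          _ ≤ (1 + t * r) * exp ((1 - t) * r) := by gcongr; linarith [add_one_le_exp ((1 - t) * r)]
    _ = log (1 + t * r) + (1 - t) * r := by rw [log_mul htr.ne' (exp_ne_zero _), log_exp]

theorem psi_ofReal_mul_le (m : ℕ) (z : ℂ) {t : ℝ} (ht0 : 0 ≤ t) (ht1 : t ≤ 1) :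
    psi m (t * z) ≤ psi m z + (1 - t) * (m * ‖z‖ - ‖z‖ ^ 2 / 2) := by
  have hlog := log_one_add_le_log_one_add_mul_add (norm_nonneg z) ht0 ht1
  rw [psi, psi, norm_mul, Complex.norm_real, Real.norm_of_nonneg ht0]
  nlinarith [mul_le_mul_of_nonneg_left hlog m.cast_nonneg,
    mul_nonneg (mul_nonneg ht0 (sub_nonneg.2 ht1)) (sq_nonneg ‖z‖)]

theorem norm_le_of_norm_mul_exp_neg_psi_le {m : ℕ} {f : ℂ → ℂ} {N : ℝ}
    (hf : ∀ z, ‖f z‖ * exp (-psi m z) ≤ N) (z : ℂ) : ‖f z‖ ≤ N * exp (psi m z) := by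
  have := hf z
  rwa [exp_neg, ← div_eq_mul_inv, div_le_iff₀ (exp_pos _)] at this

theorem norm_ofReal_mul_le_of_norm_mul_exp_neg_psi_le {m : ℕ} {f : ℂ → ℂ} {N : ℝ}
    (hf : ∀ z, ‖f z‖ * exp (-psi m z) ≤ N) (z : ℂ) {t : ℝ} (ht0 : 0 ≤ t) (ht1 : t ≤ 1) :
    ‖f (t * z)‖ ≤ N * exp (psi m z) * exp ((1 - t) * (m * ‖z‖ - ‖z‖ ^ 2 / 2)) := by
  have hN : 0 ≤ N := (mul_nonneg (norm_nonneg _) (exp_pos _).le).trans (hf 0)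
  calc ‖f (t * z)‖ ≤ N * exp (psi m (t * z)) := norm_le_of_norm_mul_exp_neg_psi_le hf _
    _ ≤ N * exp (psi m z + (1 - t) * (m * ‖z‖ - ‖z‖ ^ 2 / 2)) := by
      gcongr; exact psi_ofReal_mul_le m z ht0 ht1
    _ = _ := by rw [exp_add, mul_assoc]

theorem integral_exp_one_sub_mul {c : ℝ} (hc : c ≠ 0) :
    ∫ t in (0 : ℝ)..1, exp ((1 - t) * c) = (exp c - 1) / c := by
  have hderiv : ∀ t ∈ uIcc (0 : ℝ) 1,
      HasDerivAt (fun s => -exp ((1 - s) * c) / c) (exp ((1 - t) * c)) t := by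
    intro t _
    have h := ((((hasDerivAt_id t).const_sub (1 : ℝ)).mul_const c).exp.neg.div_const c)
    refine h.congr_deriv ?_
    field_simp
    simp only [id]
    congr 1
    ring
  rw [intervalIntegral.integral_eq_sub_of_hasDerivAt hderiv
    ((by fun_prop : Continuous fun t : ℝ => exp ((1 - t) * c)).intervalIntegrable 0 1)]
  simp only [sub_self, zero_mul, exp_zero, sub_zero, one_mul]
  ring

theorem integral_exp_one_sub_mul_le_inv {c : ℝ} (hc : c < 0) :
    ∫ t in (0 : ℝ)..1, exp ((1 - t) * c) ≤ (-c)⁻¹ := by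
  rw [integral_exp_one_sub_mul hc.ne, ← neg_div_neg_eq, neg_sub, div_eq_mul_inv]
  have : 0 < (-c)⁻¹ := inv_pos.2 (neg_pos.2 hc)
  nlinarith [exp_pos c]

theorem integral_exp_one_sub_mul_le_exp {c d : ℝ} (hd : 0 ≤ d) (hcd : c ≤ d) :
    ∫ t in (0 : ℝ)..1, exp ((1 - t) * c) ≤ exp d := by
  have hbound : ∀ t ∈ Ι (0 : ℝ) 1, ‖exp ((1 - t) * c)‖ ≤ exp d := by
    intro t ht
    rw [uIoc_of_le zero_le_one] at ht
    rw [norm_of_nonneg (exp_pos _).le, exp_le_exp]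
    nlinarith [ht.1, ht.2]
  simpa using (le_norm_self _).trans (intervalIntegral.norm_integral_le_of_norm_le_const hbound)

theorem exists_mul_integral_exp_weight_le (m : ℕ) :
    ∃ C > (0 : ℝ), ∀ r : ℝ, 0 ≤ r →
      r * (1 + r) * ∫ t in (0 : ℝ)..1, exp ((1 - t) * (m * r - r ^ 2 / 2)) ≤ C := by
  set R : ℝ := 4 * m + 1
  have hm : (0 : ℝ) ≤ m := m.cast_nonneg
  refine ⟨R * (1 + R) * exp (m * R) + 8, by positivity, fun r hr => ?_⟩
  rcases le_or_gt r R with hrR | hRr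
  · have hJ := integral_exp_one_sub_mul_le_exp (by positivity : 0 ≤ (m : ℝ) * R)
      (by nlinarith : (m : ℝ) * r - r ^ 2 / 2 ≤ m * R)
    calc r * (1 + r) * ∫ t in (0 : ℝ)..1, exp ((1 - t) * (m * r - r ^ 2 / 2))
        ≤ R * (1 + R) * exp (m * R) := by
          gcongr
          exact intervalIntegral.integral_nonneg zero_le_one fun t _ => (exp_pos _).le
      _ ≤ R * (1 + R) * exp (m * R) + 8 := le_add_of_nonneg_right (by norm_num)
  · -- beyond `R` the Gaussian factor wins: `m r - r²/2 ≤ -r²/4`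
    have hr1 : 1 ≤ r := by linarith
    have hJ := integral_exp_one_sub_mul_le_inv (by nlinarith : (m : ℝ) * r - r ^ 2 / 2 < 0)
    have hpos : 0 < -((m : ℝ) * r - r ^ 2 / 2) := by nlinarith
    calc r * (1 + r) * ∫ t in (0 : ℝ)..1, exp ((1 - t) * (m * r - r ^ 2 / 2))
        ≤ r * (1 + r) * (-((m : ℝ) * r - r ^ 2 / 2))⁻¹ := by gcongr
      _ ≤ 8 := by
        rw [← div_eq_mul_inv, div_le_iff₀ hpos]
        nlinarith
      _ ≤ R * (1 + R) * exp (m * R) + 8 := le_add_of_nonneg_left (by positivity)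

theorem norm_lineInt_le {F : ℂ → ℂ} {G : ℝ → ℝ} (z : ℂ) (hG : IntervalIntegrable G volume 0 1)
    (hFG : ∀ t ∈ Icc (0 : ℝ) 1, ‖F (t * z)‖ ≤ G t) :
    ‖lineInt F z‖ ≤ (∫ t in (0 : ℝ)..1, G t) * ‖z‖ := by
  rw [lineInt, norm_mul]
  gcongr
  exact intervalIntegral.norm_integral_le_of_norm_le zero_le_one
    (Filter.Eventually.of_forall fun t ht => hFG t (Ioc_subset_Icc_self ht)) hG

/-- If deg g ≤ 2 then V_g is bounded on F^∞_{ψ_m}. -/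
theorem stmt_9 (m : ℕ) (a b c : ℂ) :
    ∃ C > (0 : ℝ), ∀ f : ℂ → ℂ, Differentiable ℂ f → ∀ N : ℝ,
      (∀ z : ℂ, ‖f z‖ * Real.exp (-psi m z) ≤ N) →
      ∀ z : ℂ, ‖Vg (fun w => a * w ^ 2 + b * w + c) f z‖ *
          Real.exp (-psi m z) ≤ C * N := by
  obtain ⟨C₀, hC₀, hbound⟩ := exists_mul_integral_exp_weight_le m
  set K := 2 * ‖a‖ + ‖b‖ + 1
  refine ⟨K * C₀, by positivity, fun f _ N hf z => ?_⟩
  set E : ℝ → ℝ := fun t => exp ((1 - t) * (m * ‖z‖ - ‖z‖ ^ 2 / 2))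
  have hN : 0 ≤ N := (mul_nonneg (norm_nonneg _) (exp_pos _).le).trans (hf 0)
  have hintegrand : ∀ t ∈ Icc (0 : ℝ) 1,
      ‖f (t * z) * deriv (fun w => a * w ^ 2 + b * w + c) (t * z)‖
        ≤ N * exp (psi m z) * K * (1 + ‖z‖) * E t := by
    rintro t ⟨ht0, ht1⟩
    have htz : ‖(t : ℂ) * z‖ ≤ ‖z‖ := by
      rw [norm_mul, Complex.norm_real, Real.norm_of_nonneg ht0]
      exact mul_le_of_le_one_left (norm_nonneg z) ht1
    calc _ ≤ (N * exp (psi m z) * E t) * (K * (1 + ‖z‖)) := by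
          rw [norm_mul]
          gcongr
          · exact norm_ofReal_mul_le_of_norm_mul_exp_neg_psi_le hf z ht0 ht1
          · exact (norm_deriv_quadratic_le a b c _).trans (by gcongr)
      _ = _ := by ring
  calc ‖Vg (fun w => a * w ^ 2 + b * w + c) f z‖ * exp (-psi m z)
      ≤ (∫ t in (0 : ℝ)..1, N * exp (psi m z) * K * (1 + ‖z‖) * E t) * ‖z‖ * exp (-psi m z) := by
        gcongr
        exact norm_lineInt_le z ((by fun_prop : Continuous _).intervalIntegrable 0 1) hintegrand
    _ = K * N * (‖z‖ * (1 + ‖z‖) * ∫ t in (0 : ℝ)..1, E t) := by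
        rw [intervalIntegral.integral_const_mul, exp_neg]
        field_simp
    _ ≤ K * N * C₀ := by gcongr; exact hbound _ (norm_nonneg z)
    _ = K * C₀ * N := by ring
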